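/- arXiv:1207.2212 — 4 statements merged into one kernel-verified Lean document; each statement's English description precedes it below -/
import Mathlib

section
/- Let f be differentiable on I° with f' integrable on [a,b], a < b, q ≥ 1, and |f'|^q s-convex in the second sense on [a,b] for some s ∈ (0,1]. Then the midpoint inequality holds: |f((a+b)/2) - (1/(b-a))∫ₐᵇ f(x)dx| ≤ ((b-a)/8)(2/((s+1)(s+2)))^{1/q} · { (2^{1-s}(s+1)/2 |f'(b)|^q + 2^{1-s}(2^{s+2}-s-3)/2 |f'(a)|^q)^{1/q} + (2^{1-s}(s+1)/2 |f'(a)|^q + 2^{1-s}(2^{s+2}-s-3)/2 |f'(b)|^q)^{1/q} }. -/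
open MeasureTheory Set intervalIntegral

/-!
Integrating by parts on both halves of `[a, b]`, the right one after the reflection
`x ↦ a + b - x`, writes `(b - a) f(m) - ∫ f` (with `m` the midpoint) as the difference of the
integrals of `(x - a) f'(x)` and `(x - a) f'(a + b - x)` over `[a, m]`. Each is bounded by Hölder's
inequality with weight `x - a`, and then by the `s`-convexity bound
`|f'(x)|^q ≤ ((b - x)/(b - a))^s |f'(a)|^q + ((x - a)/(b - a))^s |f'(b)|^q`,
whose weighted integral over `[a, m]` is computed explicitly.
-/

/-- `s`-convexity in the second sense (Breckner). -/
def SConvexOn (s : ℝ) (S : Set ℝ) (g : ℝ → ℝ) : Prop :=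
  ∀ x ∈ S, ∀ y ∈ S, ∀ t ∈ Icc (0 : ℝ) 1, g (t * x + (1 - t) * y) ≤ t ^ s * g x + (1 - t) ^ s * g y

theorem integral_mul_le_weight_mul_Lp_of_nonneg {α : Type*} [MeasurableSpace α] {μ : Measure α}
    {w g : α → ℝ} {q : ℝ} (hq : 1 ≤ q) (hw0 : 0 ≤ᵐ[μ] w) (hg0 : 0 ≤ᵐ[μ] g)
    (hg : AEStronglyMeasurable g μ) (hw : Integrable w μ)
    (hwg : Integrable (fun x => w x * g x ^ q) μ) :
    ∫ x, w x * g x ∂μ ≤ (∫ x, w x ∂μ) ^ (1 - 1 / q) * (∫ x, w x * g x ^ q ∂μ) ^ (1 / q) := by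
  rcases hq.eq_or_lt with rfl | hq1
  · simp
  set p := q.conjExponent
  have hpq : p.HolderConjugate q := (Real.HolderConjugate.conjExponent hq1).symm
  have hsum : 1 / p + 1 / q = 1 := by rw [one_div, one_div]; exact hpq.inv_add_inv_eq_one
  -- Hölder for `w ^ (1/p)` and `w ^ (1/q) * g`, whose product is `w * g`.
  set F := fun x => w x ^ (1 / p)
  set G := fun x => w x ^ (1 / q) * g x
  have hFp : (fun x => F x ^ p) =ᵐ[μ] w := by
    filter_upwards [hw0] with x hx
    rw [← Real.rpow_mul hx, one_div_mul_cancel hpq.ne_zero, Real.rpow_one]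
  have hGq : (fun x => G x ^ q) =ᵐ[μ] fun x => w x * g x ^ q := by
    filter_upwards [hw0, hg0] with x hx hgx
    rw [Real.mul_rpow (Real.rpow_nonneg hx _) hgx, ← Real.rpow_mul hx,
      one_div_mul_cancel hpq.symm.ne_zero, Real.rpow_one]
  have hFG : (fun x => F x * G x) =ᵐ[μ] fun x => w x * g x := by
    filter_upwards [hw0] with x hx
    rw [← mul_assoc, ← Real.rpow_add' hx (by rw [hsum]; exact one_ne_zero), hsum, Real.rpow_one]
  have hF0 : 0 ≤ᵐ[μ] F := by
    filter_upwards [hw0] with x hx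
    exact Real.rpow_nonneg hx _
  have hG0 : 0 ≤ᵐ[μ] G := by
    filter_upwards [hw0, hg0] with x hx hgx
    exact mul_nonneg (Real.rpow_nonneg hx _) hgx
  have hwm := hw.aemeasurable
  have memLp_of_rpow {r : ℝ} (hr : 0 < r) {H : α → ℝ} (hH0 : 0 ≤ᵐ[μ] H)
      (hHm : AEStronglyMeasurable H μ) (hHr : Integrable (fun x => H x ^ r) μ) :
      MemLp H (ENNReal.ofReal r) μ := by
    refine (integrable_norm_rpow_iff hHm (by simpa using hr) ENNReal.ofReal_ne_top).1 ?_
    refine hHr.congr ?_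
    filter_upwards [hH0] with x hx
    rw [ENNReal.toReal_ofReal hr.le, Real.norm_of_nonneg hx]
  have H := integral_mul_le_Lp_mul_Lq_of_nonneg hpq hF0 hG0
    (memLp_of_rpow hpq.pos hF0 (hwm.pow_const _).aestronglyMeasurable (hw.congr hFp.symm))
    (memLp_of_rpow hpq.symm.pos hG0 ((hwm.pow_const _).mul hg.aemeasurable).aestronglyMeasurable
      (hwg.congr hGq.symm))
  rwa [integral_congr_ae hFG, integral_congr_ae hFp, integral_congr_ae hGq,
    show 1 / p = 1 - 1 / q by linarith] at H

theorem integral_sub_mul_deriv {f f' : ℝ → ℝ} {a b : ℝ}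
    (hf : ∀ x ∈ uIcc a b, HasDerivAt f (f' x) x) (hf' : IntervalIntegrable f' volume a b) :
    ∫ x in a..b, (x - a) * f' x = (b - a) * f b - ∫ x in a..b, f x := by
  simpa using integral_mul_deriv_eq_deriv_mul (u' := fun _ => 1)
    (fun x _ => (hasDerivAt_id x).sub_const a) hf intervalIntegrable_const hf'

theorem mul_midpoint_sub_integral_eq {f f' : ℝ → ℝ} {a b : ℝ} (hab : a ≤ b)
    (hf : ∀ x ∈ Icc a b, HasDerivAt f (f' x) x) (hf' : IntervalIntegrable f' volume a b) :
    (b - a) * f ((a + b) / 2) - ∫ x in a..b, f x =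
      (∫ x in a..(a + b) / 2, (x - a) * f' x) -
        ∫ x in a..(a + b) / 2, (x - a) * f' (a + b - x) := by
  set m := (a + b) / 2 with hm
  have ham : a ≤ m := by linarith
  have hmb : m ≤ b := by linarith
  have hsub : uIcc a m ⊆ Icc a b := by rw [uIcc_of_le ham]; exact Icc_subset_Icc le_rfl hmb
  have hrefl : ∀ x ∈ uIcc a m, a + b - x ∈ Icc a b := fun x hx => by
    rw [uIcc_of_le ham] at hx; constructor <;> linarith [hx.1, hx.2]
  have hf'_refl : IntervalIntegrable (fun x => f' (a + b - x)) volume a b := by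
    simpa using (hf'.comp_sub_left (a + b)).symm
  have hleft := integral_sub_mul_deriv (fun x hx => hf x (hsub hx))
    (hf'.mono_set (by rwa [uIcc_of_le hab]))
  have hright := integral_sub_mul_deriv (f := fun x => f (a + b - x))
    (f' := fun x => -f' (a + b - x)) (a := a) (b := m)
    (fun x hx => (hf _ (hrefl x hx)).comp_const_sub (a + b) x)
    (hf'_refl.neg.mono_set (by rwa [uIcc_of_le hab]))
  have hf_int : IntervalIntegrable f volume a b :=
    ContinuousOn.intervalIntegrable fun x hx =>
      (hf x (by rwa [uIcc_of_le hab] at hx)).continuousAt.continuousWithinAt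
  have hsplit := integral_add_adjacent_intervals
    (hf_int.mono_set (c := a) (d := m) (by rwa [uIcc_of_le hab]))
    (hf_int.mono_set (c := m) (d := b) (by
      rw [uIcc_of_le hmb, uIcc_of_le hab]; exact Icc_subset_Icc ham le_rfl))
  rw [integral_comp_sub_left (fun x => f x)] at hright
  simp only [mul_neg, intervalIntegral.integral_neg] at hright
  rw [show a + b - m = m by ring, show a + b - a = b by ring] at hright
  have hma : m - a = (b - a) / 2 := by linarith
  rw [hma] at hleft hright
  rw [← hsplit]
  linarith

theorem abs_integral_sub_mul_le {g : ℝ → ℝ} {a m : ℝ} (ham : a ≤ m) :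
    |∫ x in a..m, (x - a) * g x| ≤ ∫ x in a..m, (x - a) * |g x| := by
  refine (intervalIntegral.abs_integral_le_integral_abs ham).trans_eq
    (integral_congr fun x hx => ?_)
  rw [uIcc_of_le ham] at hx
  simp only [abs_mul, abs_of_nonneg (sub_nonneg.2 hx.1)]

theorem integral_mul_one_sub_rpow_add_rpow {s : ℝ} (hs : 0 ≤ s) (u v : ℝ) :
    ∫ t in (0 : ℝ)..1 / 2, t * ((1 - t) ^ s * u + t ^ s * v) =
      2 / ((s + 1) * (s + 2)) / 8 *
        ((2 : ℝ) ^ (1 - s) * (s + 1) / 2 * v +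
          (2 : ℝ) ^ (1 - s) * ((2 : ℝ) ^ (s + 2) - s - 3) / 2 * u) := by
  have hs1 : s + 1 ≠ 0 := by positivity
  have hs2 : s + 2 ≠ 0 := by positivity
  have hderiv : ∀ t ∈ uIcc (0 : ℝ) (1 / 2), HasDerivAt
      (fun t => u * ((1 - t) ^ (s + 2) / (s + 2) - (1 - t) ^ (s + 1) / (s + 1)) +
        v * (t ^ (s + 2) / (s + 2)))
      (t * ((1 - t) ^ s * u + t ^ s * v)) t := by
    intro t ht
    rw [uIcc_of_le (by norm_num)] at ht
    have hsub := (hasDerivAt_id t).const_sub (1 : ℝ)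
    have H := (((hsub.rpow_const (p := s + 2) (Or.inr (by linarith))).div_const (s + 2)).sub
      ((hsub.rpow_const (p := s + 1) (Or.inr (by linarith))).div_const (s + 1))).const_mul u |>.add
      (((hasDerivAt_id t).rpow_const (p := s + 2) (Or.inr (by linarith))).div_const (s + 2)
        |>.const_mul v)
    refine H.congr_deriv ?_
    simp only [id, show s + 2 - 1 = s + 1 by ring, add_sub_cancel_right]
    rw [Real.rpow_add_one' (by linarith [ht.2]) hs1, Real.rpow_add_one' ht.1 hs1]
    field_simp
    ring
  rw [integral_eq_sub_of_hasDerivAt hderiv]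
  · have hP : (0 : ℝ) < 2 ^ s := by positivity
    have e1 : (2 : ℝ) ^ (1 - s) = 2 / 2 ^ s := by rw [Real.rpow_sub two_pos, Real.rpow_one]
    have e2 : (2 : ℝ) ^ (s + 2) = 2 ^ s * 4 := by rw [Real.rpow_add two_pos]; norm_num
    have e3 : ((1 : ℝ) - 1 / 2) ^ (s + 1) = 1 / (2 ^ s * 2) := by
      rw [show (1 : ℝ) - 1 / 2 = 2⁻¹ by norm_num, Real.inv_rpow zero_le_two,
        Real.rpow_add_one two_ne_zero, one_div]
    have e4 : ((1 : ℝ) - 1 / 2) ^ (s + 2) = 1 / (2 ^ s * 4) := by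
      rw [show (1 : ℝ) - 1 / 2 = 2⁻¹ by norm_num, Real.inv_rpow zero_le_two, e2, one_div]
    have e5 : ((1 : ℝ) / 2) ^ (s + 2) = 1 / (2 ^ s * 4) := by
      rw [one_div, Real.inv_rpow zero_le_two, e2, one_div]
    simp only [sub_zero, Real.one_rpow, Real.zero_rpow hs2, e1, e2, e3, e4, e5]
    field_simp
    ring
  · exact Continuous.intervalIntegrable (by fun_prop (disch := exact fun _ => Or.inr hs)) _ _

namespace SConvexOn

variable {s a b : ℝ} {g : ℝ → ℝ}

theorem comp_const_sub (hg : SConvexOn s (Icc a b) g) :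
    SConvexOn s (Icc a b) fun x => g (a + b - x) := by
  intro x hx y hy t ht
  have hx' : a + b - x ∈ Icc a b := ⟨by linarith [hx.2], by linarith [hx.1]⟩
  have hy' : a + b - y ∈ Icc a b := ⟨by linarith [hy.2], by linarith [hy.1]⟩
  convert hg _ hx' _ hy' t ht using 2
  ring

theorem le_of_mem_Icc (hg : SConvexOn s (Icc a b) g) (hab : a < b) {x : ℝ} (hx : x ∈ Icc a b) :
    g x ≤ ((b - x) / (b - a)) ^ s * g a + ((x - a) / (b - a)) ^ s * g b := by
  have hba : 0 < b - a := sub_pos.2 hab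
  have ht : (b - x) / (b - a) ∈ Icc (0 : ℝ) 1 :=
    ⟨div_nonneg (by linarith [hx.2]) hba.le, (div_le_one hba).2 (by linarith [hx.1])⟩
  have h1t : 1 - (b - x) / (b - a) = (x - a) / (b - a) := by field_simp; ring
  have hpt : (b - x) / (b - a) * a + (x - a) / (b - a) * b = x := by field_simp; ring
  simpa only [h1t, hpt] using hg a (left_mem_Icc.2 hab.le) b (right_mem_Icc.2 hab.le) _ ht

theorem intervalIntegrable (hg : SConvexOn s (Icc a b) g) (hab : a < b) (hs : 0 ≤ s)
    (hg0 : ∀ x ∈ Icc a b, 0 ≤ g x) (hgm : AEStronglyMeasurable g (volume.restrict (Ioc a b))) :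
    IntervalIntegrable g volume a b := by
  have hba : 0 < b - a := sub_pos.2 hab
  rw [intervalIntegrable_iff_integrableOn_Ioc_of_le hab.le]
  refine Integrable.mono' (integrable_const (g a + g b)) hgm
    (ae_restrict_of_forall_mem measurableSet_Ioc fun x hx => ?_)
  have hx : x ∈ Icc a b := Ioc_subset_Icc_self hx
  have hga := hg0 a (left_mem_Icc.2 hab.le)
  have hgb := hg0 b (right_mem_Icc.2 hab.le)
  have hl : ((b - x) / (b - a)) ^ s ≤ 1 :=
    Real.rpow_le_one (div_nonneg (by linarith [hx.2]) hba.le)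
      ((div_le_one hba).2 (by linarith [hx.1])) hs
  have hr : ((x - a) / (b - a)) ^ s ≤ 1 :=
    Real.rpow_le_one (div_nonneg (by linarith [hx.1]) hba.le)
      ((div_le_one hba).2 (by linarith [hx.2])) hs
  rw [Real.norm_of_nonneg (hg0 x hx)]
  calc g x ≤ ((b - x) / (b - a)) ^ s * g a + ((x - a) / (b - a)) ^ s * g b :=
        hg.le_of_mem_Icc hab hx
    _ ≤ g a + g b := add_le_add (mul_le_of_le_one_left hga hl) (mul_le_of_le_one_left hgb hr)

theorem integral_sub_mul_le (hg : SConvexOn s (Icc a b) g) (hab : a < b) (hs : 0 ≤ s)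
    (hint : IntervalIntegrable (fun x => (x - a) * g x) volume a ((a + b) / 2)) :
    ∫ x in a..(a + b) / 2, (x - a) * g x ≤
      (b - a) ^ 2 / 8 * (2 / ((s + 1) * (s + 2))) *
        ((2 : ℝ) ^ (1 - s) * (s + 1) / 2 * g b +
          (2 : ℝ) ^ (1 - s) * ((2 : ℝ) ^ (s + 2) - s - 3) / 2 * g a) := by
  set c := b - a
  have hc : c ≠ 0 := (sub_pos.2 hab).ne'
  set h : ℝ → ℝ := fun t => t * ((1 - t) ^ s * g a + t ^ s * g b)
  have hh : Continuous h := by fun_prop (disch := exact fun _ => Or.inr hs)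
  -- `le_of_mem_Icc` written in the variable `t = (x - a) / c`
  have hrescale : ∀ x, (x - a) * (((b - x) / c) ^ s * g a + ((x - a) / c) ^ s * g b) =
      c * h (c⁻¹ * x - c⁻¹ * a) := fun x => by
    have h1 : (b - x) / c = 1 - (c⁻¹ * x - c⁻¹ * a) := by field_simp; ring
    have h2 : (x - a) / c = c⁻¹ * x - c⁻¹ * a := by field_simp
    rw [h1, h2]
    simp only [h]
    field_simp
  calc ∫ x in a..(a + b) / 2, (x - a) * g x
      ≤ ∫ x in a..(a + b) / 2, c * h (c⁻¹ * x - c⁻¹ * a) := by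
        refine integral_mono_on (by linarith) hint
          ((continuous_const.mul (hh.comp (by fun_prop))).intervalIntegrable _ _) fun x hx => ?_
        rw [← hrescale]
        exact mul_le_mul_of_nonneg_left (hg.le_of_mem_Icc hab ⟨hx.1, by linarith [hx.2]⟩)
          (by linarith [hx.1])
    _ = c ^ 2 * ∫ t in (0 : ℝ)..1 / 2, h t := by
        rw [intervalIntegral.integral_const_mul, integral_comp_mul_sub h (inv_ne_zero hc), sub_self,
          show c⁻¹ * ((a + b) / 2) - c⁻¹ * a = 1 / 2 by field_simp; ring, smul_eq_mul, inv_inv]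
        ring
    _ = _ := by
        rw [integral_mul_one_sub_rpow_add_rpow hs]
        ring

end SConvexOn

theorem integral_sub_mul_abs_le_of_sConvexOn {g : ℝ → ℝ} {a b s q : ℝ} (hab : a < b) (hs : 0 ≤ s)
    (hq : 1 ≤ q) (hg : IntervalIntegrable g volume a b)
    (hconv : SConvexOn s (Icc a b) fun x => |g x| ^ q) :
    ∫ x in a..(a + b) / 2, (x - a) * |g x| ≤
      (b - a) ^ 2 / 8 * (2 / ((s + 1) * (s + 2))) ^ (1 / q) *
        ((2 : ℝ) ^ (1 - s) * (s + 1) / 2 * |g b| ^ q +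
          (2 : ℝ) ^ (1 - s) * ((2 : ℝ) ^ (s + 2) - s - 3) / 2 * |g a| ^ q) ^ (1 / q) := by
  set m := (a + b) / 2 with hm
  set A := (2 : ℝ) ^ (1 - s) * (s + 1) / 2 * |g b| ^ q +
    (2 : ℝ) ^ (1 - s) * ((2 : ℝ) ^ (s + 2) - s - 3) / 2 * |g a| ^ q
  set W := (b - a) ^ 2 / 8
  set K := 2 / ((s + 1) * (s + 2))
  have ham : a ≤ m := by linarith
  have hW : 0 < W := by have := sub_pos.2 hab; positivity
  have hK : 0 < K := by positivity
  have hgm : AEStronglyMeasurable g (volume.restrict (Ioc a b)) := hg.1.aestronglyMeasurable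
  have hgq : IntervalIntegrable (fun x => |g x| ^ q) volume a m :=
    (hconv.intervalIntegrable hab hs (fun _ _ => by positivity)
      (hgm.aemeasurable.abs.pow_const q).aestronglyMeasurable).mono_set
      (by rw [uIcc_of_le ham, uIcc_of_le hab.le]; exact Icc_subset_Icc le_rfl (by linarith))
  have hwgq : IntervalIntegrable (fun x => (x - a) * |g x| ^ q) volume a m :=
    hgq.continuousOn_mul (by fun_prop)
  have hJ0 : 0 ≤ ∫ x in a..m, (x - a) * |g x| ^ q :=
    integral_nonneg ham fun x hx => mul_nonneg (by linarith [hx.1]) (by positivity)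
  have hJ : ∫ x in a..m, (x - a) * |g x| ^ q ≤ W * K * A := hconv.integral_sub_mul_le hab hs hwgq
  have hA : 0 ≤ A := nonneg_of_mul_nonneg_right (hJ0.trans hJ) (mul_pos hW hK)
  have hW_eq : ∫ x in a..m, (x - a) = W := by
    simp only [integral_comp_sub_right fun x => x, integral_id]
    ring
  have hHolder : ∫ x in a..m, (x - a) * |g x| ≤
      (∫ x in a..m, (x - a)) ^ (1 - 1 / q) * (∫ x in a..m, (x - a) * |g x| ^ q) ^ (1 / q) := by
    simp only [integral_of_le ham]
    refine integral_mul_le_weight_mul_Lp_of_nonneg hq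
      (ae_restrict_of_forall_mem measurableSet_Ioc fun x hx => sub_nonneg.2 hx.1.le)
      (Filter.Eventually.of_forall fun x => abs_nonneg (g x)) ?_ ?_ hwgq.1
    · exact (hgm.mono_measure
        (Measure.restrict_mono (Ioc_subset_Ioc le_rfl (by linarith)) le_rfl)).norm
    · exact (continuous_id.sub continuous_const).integrableOn_Ioc
  have hq0 : 0 ≤ 1 / q := one_div_nonneg.2 (by linarith)
  calc ∫ x in a..m, (x - a) * |g x|
      ≤ W ^ (1 - 1 / q) * (∫ x in a..m, (x - a) * |g x| ^ q) ^ (1 / q) := hW_eq ▸ hHolder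
    _ ≤ W ^ (1 - 1 / q) * (W * K * A) ^ (1 / q) := by gcongr
    _ = W * K ^ (1 / q) * A ^ (1 / q) := by
        rw [Real.mul_rpow (by positivity) hA, Real.mul_rpow hW.le hK.le, ← mul_assoc, ← mul_assoc,
          ← Real.rpow_add hW, sub_add_cancel, Real.rpow_one]

theorem stmt_5_general (I : Set ℝ) (f f' : ℝ → ℝ) (a b s q : ℝ)
    (hab : a < b) (hI : Set.Icc a b ⊆ interior I)
    (hs : s ∈ Set.Ioc (0:ℝ) 1) (hq : 1 ≤ q)
    (hder : ∀ x ∈ interior I, HasDerivAt f (f' x) x)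
    (hint : IntervalIntegrable f' volume a b)
    (hconv : ∀ x ∈ Set.Icc a b, ∀ y ∈ Set.Icc a b, ∀ t ∈ Set.Icc (0:ℝ) 1,
      |f' (t * x + (1 - t) * y)| ^ q ≤ t ^ s * |f' x| ^ q + (1 - t) ^ s * |f' y| ^ q) :
    |f ((a + b)/2) - (1 / (b - a)) * ∫ x in a..b, f x|
      ≤ ((b - a)/8) * (2 / ((s+1) * (s+2))) ^ (1/q) *
        (((2:ℝ)^(1-s) * (s+1) / 2 * |f' b| ^ q
            + (2:ℝ)^(1-s) * ((2:ℝ)^(s+2) - s - 3) / 2 * |f' a| ^ q) ^ (1/q)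
          + ((2:ℝ)^(1-s) * (s+1) / 2 * |f' a| ^ q
            + (2:ℝ)^(1-s) * ((2:ℝ)^(s+2) - s - 3) / 2 * |f' b| ^ q) ^ (1/q)) := by
  have hc : 0 < b - a := sub_pos.2 hab
  have hconv' : SConvexOn s (Icc a b) fun x => |f' x| ^ q := hconv
  have hleft := integral_sub_mul_abs_le_of_sConvexOn hab hs.1.le hq hint hconv'
  have hright := integral_sub_mul_abs_le_of_sConvexOn hab hs.1.le hq
    (by simpa using (hint.comp_sub_left (a + b)).symm) hconv'.comp_const_sub
  simp only [add_sub_cancel_right, add_sub_cancel_left] at hright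
  have hid := mul_midpoint_sub_integral_eq hab.le (fun x hx => hder x (hI hx)) hint
  have hm : a ≤ (a + b) / 2 := by linarith
  calc |f ((a + b) / 2) - 1 / (b - a) * ∫ x in a..b, f x|
      = 1 / (b - a) * |(b - a) * f ((a + b) / 2) - ∫ x in a..b, f x| := by
        rw [← abs_of_pos (one_div_pos.2 hc), ← abs_mul, abs_of_pos (one_div_pos.2 hc)]
        field_simp
    _ ≤ 1 / (b - a) * ((∫ x in a..(a + b) / 2, (x - a) * |f' x|) +
          ∫ x in a..(a + b) / 2, (x - a) * |f' (a + b - x)|) := by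
        rw [hid]
        exact mul_le_mul_of_nonneg_left ((abs_sub _ _).trans (add_le_add
          (abs_integral_sub_mul_le hm) (abs_integral_sub_mul_le hm))) (by positivity)
    _ ≤ _ := by
        rw [div_mul_eq_mul_div, one_mul, div_le_iff₀ hc]
        linarith

theorem stmt_5 (I : Set ℝ) (f f' : ℝ → ℝ) (a b s q : ℝ)
    (hab : a < b) (hI0 : I ⊆ Set.Ici (0:ℝ)) (hI : Set.Icc a b ⊆ interior I)
    (hs : s ∈ Set.Ioc (0:ℝ) 1) (hq : 1 ≤ q)
    (hder : ∀ x ∈ interior I, HasDerivAt f (f' x) x)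
    (hint : IntervalIntegrable f' volume a b)
    (hconv : ∀ x ∈ Set.Icc a b, ∀ y ∈ Set.Icc a b, ∀ t ∈ Set.Icc (0:ℝ) 1,
      |f' (t * x + (1 - t) * y)| ^ q ≤ t ^ s * |f' x| ^ q + (1 - t) ^ s * |f' y| ^ q) :
    |f ((a + b)/2) - (1 / (b - a)) * ∫ x in a..b, f x|
      ≤ ((b - a)/8) * (2 / ((s+1) * (s+2))) ^ (1/q) *
        (((2:ℝ)^(1-s) * (s+1) / 2 * |f' b| ^ q
            + (2:ℝ)^(1-s) * ((2:ℝ)^(s+2) - s - 3) / 2 * |f' a| ^ q) ^ (1/q)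
          + ((2:ℝ)^(1-s) * (s+1) / 2 * |f' a| ^ q
            + (2:ℝ)^(1-s) * ((2:ℝ)^(s+2) - s - 3) / 2 * |f' b| ^ q) ^ (1/q)) :=
  stmt_5_general I f f' a b s q hab hI hs hq hder hint hconv
end

section
/- If |f'|^q is h-convex on [a,b] and α ∈ [0,1], then ∫₀^{1-α} |f'(tb+(1-t)a)|^q dt ≤ (1-α)[|f'((1-α)b+αa)|^q + |f'(a)|^q] ∫₀¹ h(t) dt. -/
/-! The substitution `t = (1 - α) u` turns the left side into `(1 - α)` times the integral over
`u ∈ [0, 1]` of `g = |f'|^q` along the segment from `a` to `x = (1 - α) b + α a`. There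
`h`-convexity bounds the integrand by `h u · g x + h (1 - u) · g a`, and the reflection `u ↦ 1 - u`
shows that both `h`-integrals equal `∫₀¹ h`. -/

open MeasureTheory Set

def HConvexOn (h : ℝ → ℝ) (s : Set ℝ) (g : ℝ → ℝ) : Prop :=
  ∀ x ∈ s, ∀ y ∈ s, ∀ t ∈ Ioo (0:ℝ) 1, g (t * x + (1 - t) * y) ≤ h t * g x + h (1 - t) * g y

theorem IntervalIntegrable.comp_segment {g : ℝ → ℝ} {x y : ℝ}
    (hg : IntervalIntegrable g volume y x) :
    IntervalIntegrable (fun u => g (u * x + (1 - u) * y)) volume 0 1 := by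
  have hseg : ∀ u : ℝ, u * x + (1 - u) * y = (x - y) * u + y := fun u => by ring
  simp only [hseg]
  rcases eq_or_ne x y with rfl | hxy
  · simp
  · simpa [sub_ne_zero.2 hxy] using (hg.comp_add_right y).comp_mul_left (c := x - y)

theorem intervalIntegral.integral_comp_segment_eq_mul (g : ℝ → ℝ) (a b c : ℝ) :
    ∫ t in (0:ℝ)..c, g (t * b + (1 - t) * a)
      = c * ∫ u in (0:ℝ)..1, g (u * (c * b + (1 - c) * a) + (1 - u) * a) := by
  have hseg : ∀ u : ℝ, u * (c * b + (1 - c) * a) + (1 - u) * a = c * u * b + (1 - c * u) * a :=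
    fun u => by ring
  simp only [hseg]
  simpa using (smul_integral_comp_mul_left (fun t => g (t * b + (1 - t) * a)) c
    (a := 0) (b := 1)).symm

theorem HConvexOn.integral_segment_le {h g : ℝ → ℝ} {s : Set ℝ} (hconv : HConvexOn h s g)
    (hh : IntervalIntegrable h volume 0 1) {x y : ℝ} (hx : x ∈ s) (hy : y ∈ s)
    (hg : IntervalIntegrable (fun u => g (u * x + (1 - u) * y)) volume 0 1) :
    ∫ u in (0:ℝ)..1, g (u * x + (1 - u) * y) ≤ (g x + g y) * ∫ t in (0:ℝ)..1, h t := by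
  have hh_symm : IntervalIntegrable (fun u => h (1 - u)) volume 0 1 := by
    simpa using (hh.comp_sub_left 1).symm
  have h_symm : ∫ u in (0:ℝ)..1, h (1 - u) = ∫ t in (0:ℝ)..1, h t := by simp
  calc ∫ u in (0:ℝ)..1, g (u * x + (1 - u) * y)
      ≤ ∫ u in (0:ℝ)..1, h u * g x + h (1 - u) * g y :=
        intervalIntegral.integral_mono_on_of_le_Ioo zero_le_one hg
          ((hh.mul_const _).add (hh_symm.mul_const _)) fun u hu => hconv x hx y hy u hu
    _ = (g x + g y) * ∫ t in (0:ℝ)..1, h t := by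
        rw [intervalIntegral.integral_add (hh.mul_const _) (hh_symm.mul_const _),
          intervalIntegral.integral_mul_const, intervalIntegral.integral_mul_const, h_symm]
        ring

theorem stmt_8_general (h f' : ℝ → ℝ) (a b α q : ℝ)
    (hab : a < b) (hα : α ∈ Set.Icc (0:ℝ) 1)
    (hhint : IntervalIntegrable h volume 0 1)
    (hgint : IntervalIntegrable (fun x => |f' x| ^ q) volume a b)
    (hconv : ∀ x ∈ Set.Icc a b, ∀ y ∈ Set.Icc a b, ∀ t ∈ Set.Ioo (0:ℝ) 1,
      |f' (t * x + (1 - t) * y)| ^ q ≤ h t * |f' x| ^ q + h (1 - t) * |f' y| ^ q) :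
    (∫ t in (0:ℝ)..(1 - α), |f' (t * b + (1 - t) * a)| ^ q)
      ≤ (1 - α) * (|f' ((1 - α) * b + α * a)| ^ q + |f' a| ^ q) * ∫ t in (0:ℝ)..1, h t := by
  obtain ⟨hα0, hα1⟩ := hα
  have hx : (1 - α) * b + α * a ∈ Icc a b := ⟨by nlinarith, by nlinarith⟩
  have ha : a ∈ Icc a b := left_mem_Icc.2 hab.le
  have hgint_ax : IntervalIntegrable (fun x => |f' x| ^ q) volume a ((1 - α) * b + α * a) :=
    hgint.mono_set (uIcc_subset_uIcc_left (Icc_subset_uIcc hx))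
  rw [intervalIntegral.integral_comp_segment_eq_mul (fun x => |f' x| ^ q), sub_sub_cancel,
    mul_assoc]
  exact mul_le_mul_of_nonneg_left
    ((show HConvexOn h (Icc a b) (fun x => |f' x| ^ q) from hconv).integral_segment_le hhint hx ha
      hgint_ax.comp_segment) (by linarith)

theorem stmt_8 (h f' : ℝ → ℝ) (a b α q : ℝ)
    (hab : a < b) (hα : α ∈ Set.Icc (0:ℝ) 1)
    (hh0 : ∀ t ∈ Set.Ioo (0:ℝ) 1, 0 ≤ h t)
    (hhint : IntervalIntegrable h volume 0 1)
    (hg0 : ∀ x ∈ Set.Icc a b, 0 ≤ |f' x| ^ q)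
    (hgint : IntervalIntegrable (fun x => |f' x| ^ q) volume a b)
    (hconv : ∀ x ∈ Set.Icc a b, ∀ y ∈ Set.Icc a b, ∀ t ∈ Set.Ioo (0:ℝ) 1,
      |f' (t * x + (1 - t) * y)| ^ q ≤ h t * |f' x| ^ q + h (1 - t) * |f' y| ^ q) :
    (∫ t in (0:ℝ)..(1 - α), |f' (t * b + (1 - t) * a)| ^ q)
      ≤ (1 - α) * (|f' ((1 - α) * b + α * a)| ^ q + |f' a| ^ q) * ∫ t in (0:ℝ)..1, h t :=
  stmt_8_general h f' a b α q hab hα hhint hgint hconv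
end

section
/- Let f be differentiable on I° with f' integrable on [a,b], a < b, α,λ ∈ [0,1], q > 1 with 1/p+1/q = 1, and |f'|^q h-concave on [a,b] with h(1/2) > 0. Set E = (1-α)|f'(((1-α)b+(1+α)a)/2)|^q, F = α|f'(((2-α)b+αa)/2)|^q, ε₁ = (αλ)^{p+1}+(1-α-αλ)^{p+1}, ε₃ = (λ(1-α))^{p+1}+(α-λ(1-α))^{p+1}. If αλ ≤ 1-α ≤ 1-λ(1-α), then |λ(αf(a)+(1-α)f(b)) + (1-λ)f(αa+(1-α)b) - (1/(b-a))∫ₐᵇ f(x)dx| ≤ (b-a)(1/(2h(1/2)))^{1/q}(1/(p+1))^{1/p}[ε₁^{1/p} E^{1/q} + ε₃^{1/p} F^{1/q}]. -/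
/-!
Rescale to `[0, 1]` and integrate by parts on `[0, 1 - α]` and `[1 - α, 1]` against the kernels
`t - αλ` and `t - (1 - λ(1 - α))`: the left-hand side becomes `b - a` times the sum of the two
integrals of kernel times `f'`. On each piece Hölder's inequality splits off the `L^p` norm of the
kernel, which is computed exactly and gives `ε₁`, `ε₃`. For the `L^q` norm of `f'`, pair every
point with its mirror image in the midpoint of the piece: `h`-concavity at `t = 1/2` bounds the sum
of `|f'|^q` at the two points by `|f'|^q` at the midpoint divided by `h(1/2)`, so the integral of
`|f'|^q` is at most half the length of the piece times that bound.
-/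

open MeasureTheory Set intervalIntegral

theorem integral_abs_sub_rpow {p x y c : ℝ} (hp : -1 < p) (hxc : x ≤ c) (hcy : c ≤ y) :
    ∫ t in x..y, |t - c| ^ p = ((c - x) ^ (p + 1) + (y - c) ^ (p + 1)) / (p + 1) := by
  have hleft : EqOn (fun t => |t - c| ^ p) (fun t => (c - t) ^ p) (uIcc x c) := by
    intro t ht
    rw [uIcc_of_le hxc] at ht
    simp only [abs_sub_comm t c, abs_of_nonneg (sub_nonneg.2 ht.2)]
  have hright : EqOn (fun t => |t - c| ^ p) (fun t => (t - c) ^ p) (uIcc c y) := by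
    intro t ht
    rw [uIcc_of_le hcy] at ht
    simp only [abs_of_nonneg (sub_nonneg.2 ht.1)]
  have hint_left : IntervalIntegrable (fun t => |t - c| ^ p) volume x c := by
    refine (intervalIntegrable_congr (hleft.mono Ioc_subset_Icc_self)).2 ?_
    simpa using (intervalIntegrable_rpow' hp (a := c - x) (b := 0)).comp_sub_left c
  have hint_right : IntervalIntegrable (fun t => |t - c| ^ p) volume c y := by
    refine (intervalIntegrable_congr (hright.mono Ioc_subset_Icc_self)).2 ?_
    simpa using (intervalIntegrable_rpow' hp (a := 0) (b := y - c)).comp_sub_right c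
  rw [← integral_add_adjacent_intervals hint_left hint_right, integral_congr hleft,
    integral_congr hright, integral_comp_sub_left (· ^ p), integral_comp_sub_right (· ^ p),
    integral_rpow (.inl hp), integral_rpow (.inl hp)]
  simp [Real.zero_rpow (show p + 1 ≠ 0 by linarith)]
  ring

theorem integral_le_of_add_comp_sub_left_le {G : ℝ → ℝ} {x y C : ℝ} (hxy : x ≤ y)
    (hG : IntervalIntegrable G volume x y) (hC : ∀ t ∈ Icc x y, G t + G (x + y - t) ≤ C) :
    ∫ t in x..y, G t ≤ (y - x) * C / 2 := by
  have hGr : IntervalIntegrable (fun t => G (x + y - t)) volume x y := by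
    simpa using (hG.comp_sub_left (x + y)).symm
  have hreflect : ∫ t in x..y, G (x + y - t) = ∫ t in x..y, G t := by
    rw [integral_comp_sub_left G]
    congr 1 <;> ring
  have hsum := integral_mono_on hxy (hG.add hGr) intervalIntegrable_const hC
  rw [integral_add hG hGr, hreflect, intervalIntegral.integral_const, smul_eq_mul] at hsum
  linarith

theorem abs_integral_sub_mul_le_s11 {g : ℝ → ℝ} {p q x y c C : ℝ} (hpq : p.HolderConjugate q)
    (hxc : x ≤ c) (hcy : c ≤ y) (hg : AEStronglyMeasurable g (volume.restrict (Ioc x y)))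
    (hC : ∀ t ∈ Icc x y, |g t| ^ q + |g (x + y - t)| ^ q ≤ C) :
    |∫ t in x..y, (t - c) * g t| ≤
      (((c - x) ^ (p + 1) + (y - c) ^ (p + 1)) / (p + 1)) ^ (1 / p) *
        ((y - x) * C / 2) ^ (1 / q) := by
  have hxy := hxc.trans hcy
  have hC0 : 0 ≤ C := (by positivity : (0:ℝ) ≤ _).trans (hC x ⟨le_rfl, hxy⟩)
  have hgq : ∀ t ∈ Icc x y, |g t| ^ q ≤ C := fun t ht =>
    (le_add_of_nonneg_right (by positivity)).trans (hC t ht)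
  have hg_bound : ∀ t ∈ Icc x y, |g t| ≤ C ^ (1 / q) := fun t ht => by
    rw [one_div, Real.le_rpow_inv_iff_of_pos (abs_nonneg _) hC0 hpq.symm.pos]
    exact hgq t ht
  have hkernel : MemLp (fun t => |t - c|) (ENNReal.ofReal p) (volume.restrict (Ioc x y)) := by
    refine .of_bound (by fun_prop) (y - x) ?_
    filter_upwards [ae_restrict_mem measurableSet_Ioc] with t ht
    rw [Real.norm_eq_abs, abs_abs, abs_sub_le_iff]
    constructor <;> linarith [ht.1, ht.2]
  have hg_memLp : MemLp (fun t => |g t|) (ENNReal.ofReal q) (volume.restrict (Ioc x y)) := by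
    refine .of_bound hg.norm (C ^ (1 / q)) ?_
    filter_upwards [ae_restrict_mem measurableSet_Ioc] with t ht
    rw [Real.norm_eq_abs, abs_abs]
    exact hg_bound t (Ioc_subset_Icc_self ht)
  have hgq_int : IntervalIntegrable (fun t => |g t| ^ q) volume x y := by
    rw [intervalIntegrable_iff_integrableOn_Ioc_of_le hxy, IntegrableOn,
      ← memLp_one_iff_integrable]
    refine .of_bound (hg.norm.aemeasurable.pow_const q).aestronglyMeasurable C ?_
    filter_upwards [ae_restrict_mem measurableSet_Ioc] with t ht
    rw [Real.norm_eq_abs, abs_of_nonneg (by positivity)]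
    exact hgq t (Ioc_subset_Icc_self ht)
  calc |∫ t in x..y, (t - c) * g t|
      ≤ ∫ t in x..y, |t - c| * |g t| := by
        simpa only [abs_mul] using abs_integral_le_integral_abs (f := fun t => (t - c) * g t) hxy
    _ ≤ (∫ t in x..y, |t - c| ^ p) ^ (1 / p) * (∫ t in x..y, |g t| ^ q) ^ (1 / q) := by
        simp only [integral_of_le hxy]
        exact integral_mul_le_Lp_mul_Lq_of_nonneg hpq (.of_forall fun _ => abs_nonneg _)
          (.of_forall fun _ => abs_nonneg _) hkernel hg_memLp
    _ ≤ _ := by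
        rw [integral_abs_sub_rpow (by linarith [hpq.pos]) hxc hcy]
        refine mul_le_mul_of_nonneg_left ?_ (Real.rpow_nonneg (div_nonneg (add_nonneg
          (Real.rpow_nonneg (sub_nonneg.2 hxc) _) (Real.rpow_nonneg (sub_nonneg.2 hcy) _))
          (by linarith [hpq.pos])) _)
        exact Real.rpow_le_rpow (integral_nonneg hxy fun _ _ => by positivity)
          (integral_le_of_add_comp_sub_left_le hxy hgq_int hC) (one_div_pos.2 hpq.symm.pos).le

theorem integral_sub_mul_deriv_eq {F F' : ℝ → ℝ} {x y : ℝ} (c : ℝ)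
    (hF : ∀ t ∈ uIcc x y, HasDerivAt F (F' t) t) (hF' : IntervalIntegrable F' volume x y) :
    ∫ t in x..y, (t - c) * F' t = (y - c) * F y - (x - c) * F x - ∫ t in x..y, F t := by
  simpa using integral_mul_deriv_eq_deriv_mul (fun t _ => (hasDerivAt_id t).sub_const c) hF
    intervalIntegrable_const hF'

theorem combination_sub_integral_eq_of_hasDerivAt {φ φ' : ℝ → ℝ} {α : ℝ} (l : ℝ)
    (hα : α ∈ Icc (0:ℝ) 1) (hφ : ∀ t ∈ Icc (0:ℝ) 1, HasDerivAt φ (φ' t) t)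
    (hφ' : IntervalIntegrable φ' volume 0 1) :
    l * (α * φ 0 + (1 - α) * φ 1) + (1 - l) * φ (1 - α) - ∫ t in (0:ℝ)..1, φ t =
      (∫ t in (0:ℝ)..(1 - α), (t - α * l) * φ' t) +
        ∫ t in (1 - α)..1, (t - (1 - l * (1 - α))) * φ' t := by
  have hsub : ∀ {x y : ℝ}, 0 ≤ x → x ≤ y → y ≤ 1 → uIcc x y ⊆ Icc 0 1 := fun hx hxy hy => by
    rw [uIcc_of_le hxy]; exact Icc_subset_Icc hx hy
  have hφ_int : ∀ {x y : ℝ}, 0 ≤ x → x ≤ y → y ≤ 1 → IntervalIntegrable φ volume x y :=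
    fun hx hxy hy => ContinuousOn.intervalIntegrable fun t ht =>
      (hφ t (hsub hx hxy hy ht)).continuousAt.continuousWithinAt
  have hIBP : ∀ {x y : ℝ} (c : ℝ), 0 ≤ x → x ≤ y → y ≤ 1 → ∫ t in x..y, (t - c) * φ' t =
      (y - c) * φ y - (x - c) * φ x - ∫ t in x..y, φ t := fun c hx hxy hy =>
    integral_sub_mul_deriv_eq c (fun t ht => hφ t (hsub hx hxy hy ht))
      (hφ'.mono_set (by simpa using hsub hx hxy hy))
  obtain ⟨hα0, hα1⟩ := hα
  rw [hIBP _ le_rfl (by linarith) (by linarith), hIBP _ (by linarith) (by linarith) le_rfl,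
    ← integral_add_adjacent_intervals (hφ_int (y := 1 - α) le_rfl (by linarith) (by linarith))
      (hφ_int (by linarith) (by linarith) le_rfl)]
  ring

theorem IntervalIntegrable.comp_sub_mul_add {g : ℝ → ℝ} {a b : ℝ} (hab : a ≠ b)
    (hg : IntervalIntegrable g volume a b) :
    IntervalIntegrable (fun t => g ((b - a) * t + a)) volume 0 1 := by
  simpa [sub_ne_zero.2 hab.symm] using (hg.comp_add_right a).comp_mul_left (c := b - a)

theorem add_le_div_of_half_concave {h φ : ℝ → ℝ} {s : Set ℝ}
    (hconc : ∀ x ∈ s, ∀ y ∈ s, ∀ t ∈ Ioo (0:ℝ) 1,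
      h t * φ x + h (1 - t) * φ y ≤ φ (t * x + (1 - t) * y))
    (hh : 0 < h (1 / 2)) {x y : ℝ} (hx : x ∈ s) (hy : y ∈ s) :
    φ x + φ y ≤ φ ((x + y) / 2) / h (1 / 2) := by
  have hmid := hconc x hx y hy (1 / 2) ⟨by norm_num, by norm_num⟩
  rw [show (1:ℝ) - 1 / 2 = 1 / 2 by norm_num, show 1 / 2 * x + 1 / 2 * y = (x + y) / 2 by ring]
    at hmid
  rw [le_div_iff₀ hh]
  linear_combination hmid

section Rescaled

variable {f f' : ℝ → ℝ} {a b : ℝ}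

theorem combination_sub_average_eq (hab : a < b) (hf : ∀ x ∈ Icc a b, HasDerivAt f (f' x) x)
    (hf' : IntervalIntegrable f' volume a b) {α : ℝ} (l : ℝ) (hα : α ∈ Icc (0:ℝ) 1) :
    l * (α * f a + (1 - α) * f b) + (1 - l) * f (α * a + (1 - α) * b)
        - (1 / (b - a)) * ∫ x in a..b, f x =
      (b - a) * ((∫ t in (0:ℝ)..(1 - α), (t - α * l) * f' ((b - a) * t + a)) +
        ∫ t in (1 - α)..1, (t - (1 - l * (1 - α))) * f' ((b - a) * t + a)) := by
  have hφ : ∀ t ∈ Icc (0:ℝ) 1,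
      HasDerivAt (fun s => f ((b - a) * s + a)) ((b - a) * f' ((b - a) * t + a)) t := by
    intro t ht
    have hmem : (b - a) * t + a ∈ Icc a b := by constructor <;> nlinarith [ht.1, ht.2]
    simpa [Function.comp_def, mul_comm] using
      (hf _ hmem).comp t (((hasDerivAt_id t).const_mul (b - a)).add_const a)
  have hunit := combination_sub_integral_eq_of_hasDerivAt l hα hφ
    ((hf'.comp_sub_mul_add hab.ne).const_mul _)
  simp only [mul_left_comm _ (b - a), intervalIntegral.integral_const_mul,
    integral_comp_mul_add f (sub_ne_zero.2 hab.ne')] at hunit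
  rw [show (b - a) * 0 + a = a by ring, show (b - a) * 1 + a = b by ring,
    show (b - a) * (1 - α) + a = α * a + (1 - α) * b by ring, smul_eq_mul] at hunit
  rw [one_div, hunit, mul_add]

theorem abs_integral_sub_mul_comp_le {h : ℝ → ℝ} {p q x y c : ℝ} (hpq : p.HolderConjugate q)
    (hab : a < b) (hf' : IntervalIntegrable f' volume a b)
    (hconc : ∀ x ∈ Icc a b, ∀ y ∈ Icc a b, ∀ t ∈ Ioo (0:ℝ) 1,
      h t * |f' x| ^ q + h (1 - t) * |f' y| ^ q ≤ |f' (t * x + (1 - t) * y)| ^ q)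
    (hhalf : 0 < h (1 / 2)) (hx : 0 ≤ x) (hxc : x ≤ c) (hcy : c ≤ y) (hy : y ≤ 1) :
    |∫ t in x..y, (t - c) * f' ((b - a) * t + a)| ≤
      (1 / (2 * h (1 / 2))) ^ (1 / q) * (1 / (p + 1)) ^ (1 / p) *
        (((c - x) ^ (p + 1) + (y - c) ^ (p + 1)) ^ (1 / p) *
          ((y - x) * |f' ((b - a) * ((x + y) / 2) + a)| ^ q) ^ (1 / q)) := by
  have hmem : ∀ t ∈ Icc x y, (b - a) * t + a ∈ Icc a b := fun t ht => by
    constructor <;> nlinarith [ht.1, ht.2]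
  have hreflect : ∀ t ∈ Icc x y, |f' ((b - a) * t + a)| ^ q + |f' ((b - a) * (x + y - t) + a)| ^ q
      ≤ |f' ((b - a) * ((x + y) / 2) + a)| ^ q / h (1 / 2) := fun t ht => by
    convert add_le_div_of_half_concave hconc hhalf (hmem t ht)
      (hmem (x + y - t) ⟨by linarith [ht.2], by linarith [ht.1]⟩) using 5
    ring
  have hmeas : AEStronglyMeasurable (fun t => f' ((b - a) * t + a)) (volume.restrict (Ioc x y)) :=
    ((hf'.comp_sub_mul_add hab.ne).mono_set (by
      rw [uIcc_of_le (hxc.trans hcy), uIcc_of_le zero_le_one]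
      exact Icc_subset_Icc hx hy)).1.aestronglyMeasurable
  have hε : 0 ≤ (c - x) ^ (p + 1) + (y - c) ^ (p + 1) :=
    add_nonneg (Real.rpow_nonneg (sub_nonneg.2 hxc) _) (Real.rpow_nonneg (sub_nonneg.2 hcy) _)
  have hp : 0 < p + 1 := by linarith [hpq.pos]
  refine (abs_integral_sub_mul_le_s11 hpq hxc hcy hmeas hreflect).trans_eq ?_
  rw [div_eq_mul_one_div _ (p + 1), Real.mul_rpow hε (by positivity),
    show (y - x) * (|f' ((b - a) * ((x + y) / 2) + a)| ^ q / h (1 / 2)) / 2 =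
      (y - x) * |f' ((b - a) * ((x + y) / 2) + a)| ^ q * (1 / (2 * h (1 / 2))) by field_simp,
    Real.mul_rpow (mul_nonneg (by linarith) (by positivity)) (by positivity)]
  ring

end Rescaled

theorem stmt_11_general (I : Set ℝ) (h f f' : ℝ → ℝ) (a b α l p q E F ε₁ ε₃ : ℝ)
    (hab : a < b) (hI : Set.Icc a b ⊆ interior I)
    (hα : α ∈ Set.Icc (0:ℝ) 1) (hl : l ∈ Set.Icc (0:ℝ) 1)
    (hq : 1 < q) (hpq : 1/p + 1/q = 1)
    (hder : ∀ x ∈ interior I, HasDerivAt f (f' x) x)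
    (hint : IntervalIntegrable f' volume a b)
    (hhalf : 0 < h (1/2))
    (hconc : ∀ x ∈ Set.Icc a b, ∀ y ∈ Set.Icc a b, ∀ t ∈ Set.Ioo (0:ℝ) 1,
      h t * |f' x| ^ q + h (1 - t) * |f' y| ^ q ≤ |f' (t * x + (1 - t) * y)| ^ q)
    (hE : E = (1 - α) * |f' (((1 - α) * b + (1 + α) * a) / 2)| ^ q)
    (hF : F = α * |f' (((2 - α) * b + α * a) / 2)| ^ q)
    (hε₁ : ε₁ = (α * l) ^ (p+1) + (1 - α - α * l) ^ (p+1))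
    (hε₃ : ε₃ = (l * (1 - α)) ^ (p+1) + (α - l * (1 - α)) ^ (p+1))
    (hcase₁ : α * l ≤ 1 - α) (hcase₂ : 1 - α ≤ 1 - l * (1 - α)) :
    |l * (α * f a + (1 - α) * f b) + (1 - l) * f (α * a + (1 - α) * b)
        - (1 / (b - a)) * ∫ x in a..b, f x|
      ≤ (b - a) * (1 / (2 * h (1/2))) ^ (1/q) * (1/(p+1)) ^ (1/p) *
        (ε₁ ^ (1/p) * E ^ (1/q) + ε₃ ^ (1/p) * F ^ (1/q)) := by
  have hpq' : p.HolderConjugate q :=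
    (Real.holderConjugate_iff.2 ⟨hq, by simpa only [one_div, add_comm] using hpq⟩).symm
  have hαl : 0 ≤ α * l := mul_nonneg hα.1 hl.1
  have H₁ := abs_integral_sub_mul_comp_le (x := 0) (y := 1 - α) hpq' hab hint hconc hhalf
    le_rfl hαl hcase₁ (by linarith [hα.1])
  have H₂ := abs_integral_sub_mul_comp_le (x := 1 - α) (y := 1) hpq' hab hint hconc hhalf
    (by linarith [hα.1]) hcase₂ (by nlinarith [hl.1]) le_rfl
  rw [show (b - a) * ((0 + (1 - α)) / 2) + a = ((1 - α) * b + (1 + α) * a) / 2 by ring,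
    sub_zero, sub_zero, ← hE, ← hε₁] at H₁
  rw [show (b - a) * ((1 - α + 1) / 2) + a = ((2 - α) * b + α * a) / 2 by ring,
    sub_sub_cancel, sub_sub_cancel, sub_sub_sub_cancel_left,
    add_comm ((α - l * (1 - α)) ^ (p + 1)), ← hε₃, ← hF] at H₂
  rw [combination_sub_average_eq hab (fun x hx => hder x (hI hx)) hint l hα, abs_mul,
    abs_of_pos (sub_pos.2 hab)]
  calc _ ≤ (b - a) * (_ + _) := mul_le_mul_of_nonneg_left (abs_add_le _ _) (sub_pos.2 hab).le
    _ ≤ (b - a) * (_ + _) := mul_le_mul_of_nonneg_left (add_le_add H₁ H₂) (sub_pos.2 hab).le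
    _ = _ := by ring

theorem stmt_11 (I : Set ℝ) (h f f' : ℝ → ℝ) (a b α l p q E F ε₁ ε₃ : ℝ)
    (hab : a < b) (hI : Set.Icc a b ⊆ interior I)
    (hα : α ∈ Set.Icc (0:ℝ) 1) (hl : l ∈ Set.Icc (0:ℝ) 1)
    (hq : 1 < q) (hpq : 1/p + 1/q = 1)
    (hder : ∀ x ∈ interior I, HasDerivAt f (f' x) x)
    (hint : IntervalIntegrable f' volume a b)
    (hh0 : ∀ t ∈ Set.Ioo (0:ℝ) 1, 0 ≤ h t)
    (hhint : IntervalIntegrable h volume 0 1)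
    (hhalf : 0 < h (1/2))
    (hconc : ∀ x ∈ Set.Icc a b, ∀ y ∈ Set.Icc a b, ∀ t ∈ Set.Ioo (0:ℝ) 1,
      h t * |f' x| ^ q + h (1 - t) * |f' y| ^ q ≤ |f' (t * x + (1 - t) * y)| ^ q)
    (hE : E = (1 - α) * |f' (((1 - α) * b + (1 + α) * a) / 2)| ^ q)
    (hF : F = α * |f' (((2 - α) * b + α * a) / 2)| ^ q)
    (hε₁ : ε₁ = (α * l) ^ (p+1) + (1 - α - α * l) ^ (p+1))
    (hε₃ : ε₃ = (l * (1 - α)) ^ (p+1) + (α - l * (1 - α)) ^ (p+1))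
    (hcase₁ : α * l ≤ 1 - α) (hcase₂ : 1 - α ≤ 1 - l * (1 - α)) :
    |l * (α * f a + (1 - α) * f b) + (1 - l) * f (α * a + (1 - α) * b)
        - (1 / (b - a)) * ∫ x in a..b, f x|
      ≤ (b - a) * (1 / (2 * h (1/2))) ^ (1/q) * (1/(p+1)) ^ (1/p) *
        (ε₁ ^ (1/p) * E ^ (1/q) + ε₃ ^ (1/p) * F ^ (1/q)) :=
  stmt_11_general I h f f' a b α l p q E F ε₁ ε₃ hab hI hα hl hq hpq hder hint hhalf hconc hE hF hε₁
    hε₃ hcase₁ hcase₂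
end

section
/- Let f be differentiable on I° with f' integrable on [a,b], a < b, q > 1 with 1/p+1/q = 1, and |f'|^q s-concave on [a,b] for s ∈ (0,1]. Then |(f(a)+f(b))/2 - (1/(b-a))∫ₐᵇ f(x)dx| ≤ ((b-a)/4)(1/(p+1))^{1/p}(1/2)^{(1-s)/q}[|f'((3b+a)/4)| + |f'((3a+b)/4)|]. -/
open MeasureTheory Set intervalIntegral

/-! Integrating by parts, the left-hand side equals `(1/(b-a)) |∫ₐᵇ (x - (a+b)/2) f' x dx|`.
On each half of `[a, b]`, Hölder's inequality separates the linear weight from `|f'|`, and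
`∫ |f'|^q` over the half is bounded by pairing `x` with its reflection `x̄` about the midpoint `m`
of the half: s-concavity at `t = 1/2` gives `|f' x|^q + |f' x̄|^q ≤ 2^s |f' m|^q`. -/

lemma integral_le_of_add_reflect_le {g : ℝ → ℝ} {α β M : ℝ} (hαβ : α ≤ β)
    (hg : IntervalIntegrable g volume α β)
    (hsym : ∀ x ∈ Icc α β, g x + g (α + β - x) ≤ 2 * M) :
    ∫ x in α..β, g x ≤ (β - α) * M := by
  have hrefl_int : IntervalIntegrable (fun x => g (α + β - x)) volume α β := by
    simpa using (hg.comp_sub_left (α + β)).symm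
  have hrefl : ∫ x in α..β, g (α + β - x) = ∫ x in α..β, g x := by
    simp [integral_comp_sub_left g (α + β)]
  have h := integral_mono_on hαβ (hg.add hrefl_int) intervalIntegrable_const hsym
  rw [integral_add hg hrefl_int, hrefl, intervalIntegral.integral_const, smul_eq_mul] at h
  linarith

section Holder

variable {p q : ℝ} (hpq : p.HolderConjugate q)
include hpq

lemma integral_sub_mul_abs_le_holder {φ : ℝ → ℝ} {α β : ℝ} (hαβ : α ≤ β)
    (hφ : IntervalIntegrable φ volume α β)
    (hφq : IntervalIntegrable (fun x => |φ x| ^ q) volume α β) :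
    ∫ x in α..β, (x - α) * |φ x|
      ≤ ((β - α) ^ (p + 1) / (p + 1)) ^ (1 / p) * (∫ x in α..β, |φ x| ^ q) ^ (1 / q) := by
  have hweight : MemLp (fun x : ℝ => x - α) (ENNReal.ofReal p) (volume.restrict (Ioc α β)) := by
    refine MemLp.of_bound (by fun_prop) (β - α) ?_
    refine (ae_restrict_iff' measurableSet_Ioc).2 (Filter.Eventually.of_forall fun x hx => ?_)
    rw [Real.norm_eq_abs, abs_of_nonneg (by linarith [hx.1])]
    linarith [hx.2]
  have hφLq : MemLp φ (ENNReal.ofReal q) (volume.restrict (Ioc α β)) := by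
    rw [← integrable_norm_rpow_iff hφ.aestronglyMeasurable (by simpa using hpq.symm.pos)
      ENNReal.ofReal_ne_top, ENNReal.toReal_ofReal hpq.symm.nonneg]
    simp only [Real.norm_eq_abs]
    exact hφq.1
  have hweight_nonneg : 0 ≤ᵐ[volume.restrict (Ioc α β)] fun x : ℝ => x - α :=
    (ae_restrict_iff' measurableSet_Ioc).2 (Filter.Eventually.of_forall fun x hx => by
      simpa using hx.1.le)
  have holder := integral_mul_le_Lp_mul_Lq_of_nonneg hpq hweight_nonneg
    (Filter.Eventually.of_forall fun x => abs_nonneg (φ x)) hweight hφLq.abs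
  have hweight_int : ∫ x in α..β, (x - α) ^ p = (β - α) ^ (p + 1) / (p + 1) := by
    rw [integral_comp_sub_right (fun x => x ^ p), sub_self,
      integral_rpow (Or.inl (by linarith [hpq.lt])), Real.zero_rpow (by linarith [hpq.lt]),
      sub_zero]
  rw [← hweight_int]
  simpa only [integral_of_le hαβ] using holder

lemma integral_sub_mul_abs_le_of_reflect_le {φ : ℝ → ℝ} {α β L : ℝ} (hαβ : α ≤ β)
    (hL : 0 ≤ L) (hφ : IntervalIntegrable φ volume α β)
    (hsym : ∀ x ∈ Icc α β, |φ x| ^ q + |φ (α + β - x)| ^ q ≤ 2 * L ^ q) :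
    ∫ x in α..β, (x - α) * |φ x| ≤ (β - α) ^ 2 * (1 / (p + 1)) ^ (1 / p) * L := by
  have hp := hpq.pos
  have hq := hpq.symm.pos
  have hφq : IntervalIntegrable (fun x => |φ x| ^ q) volume α β := by
    have hmeas : AEStronglyMeasurable (fun x => |φ x| ^ q) (volume.restrict (Ioc α β)) :=
      (Real.continuous_rpow_const hq.le).comp_aestronglyMeasurable
        hφ.aestronglyMeasurable.norm
    refine IntervalIntegrable.mono_fun' (g := fun _ => 2 * L ^ q) intervalIntegrable_const
      (by rwa [uIoc_of_le hαβ]) ?_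
    rw [uIoc_of_le hαβ]
    refine (ae_restrict_iff' measurableSet_Ioc).2 (Filter.Eventually.of_forall fun x hx => ?_)
    dsimp only
    rw [Real.norm_of_nonneg (Real.rpow_nonneg (abs_nonneg _) _)]
    linarith [hsym x (Ioc_subset_Icc_self hx), Real.rpow_nonneg (abs_nonneg (φ (α + β - x))) q]
  have hLq : ∫ x in α..β, |φ x| ^ q ≤ (β - α) * L ^ q :=
    integral_le_of_add_reflect_le hαβ hφq hsym
  have hβα : 0 ≤ β - α := by linarith
  have hβαp : 0 ≤ (β - α) ^ (p + 1) := Real.rpow_nonneg hβα _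
  have hexp : (p + 1) * (1 / p) + 1 / q = 2 := by
    have := hpq.inv_add_inv_eq_one
    field_simp [hpq.ne_zero] at this ⊢
    linarith
  calc ∫ x in α..β, (x - α) * |φ x|
      ≤ ((β - α) ^ (p + 1) / (p + 1)) ^ (1 / p) * (∫ x in α..β, |φ x| ^ q) ^ (1 / q) :=
        integral_sub_mul_abs_le_holder hpq hαβ hφ hφq
    _ ≤ ((β - α) ^ (p + 1) / (p + 1)) ^ (1 / p) * ((β - α) * L ^ q) ^ (1 / q) := by
        refine mul_le_mul_of_nonneg_left ?_ (by positivity)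
        exact Real.rpow_le_rpow (intervalIntegral.integral_nonneg hαβ fun x _ => by positivity)
          hLq (by positivity)
    _ = (β - α) ^ ((p + 1) * (1 / p) + 1 / q) * (1 / (p + 1)) ^ (1 / p) * L := by
        rw [div_eq_mul_one_div, Real.mul_rpow hβαp (by positivity),
          Real.mul_rpow hβα (by positivity), ← Real.rpow_mul hβα, ← Real.rpow_mul hL,
          mul_one_div_cancel hq.ne', Real.rpow_one, Real.rpow_add' hβα (by rw [hexp]; norm_num)]
        ring
    _ = (β - α) ^ 2 * (1 / (p + 1)) ^ (1 / p) * L := by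
        rw [hexp, Real.rpow_two]

lemma integral_rev_sub_mul_abs_le_of_reflect_le {φ : ℝ → ℝ} {α β L : ℝ} (hαβ : α ≤ β)
    (hL : 0 ≤ L) (hφ : IntervalIntegrable φ volume α β)
    (hsym : ∀ x ∈ Icc α β, |φ x| ^ q + |φ (α + β - x)| ^ q ≤ 2 * L ^ q) :
    ∫ x in α..β, (β - x) * |φ x| ≤ (β - α) ^ 2 * (1 / (p + 1)) ^ (1 / p) * L := by
  have hreflect : ∫ x in α..β, (β - x) * |φ x| = ∫ x in α..β, (x - α) * |φ (α + β - x)| := by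
    have h := integral_comp_sub_left (a := α) (b := β) (fun x => (β - x) * |φ x|) (α + β)
    simp only [add_sub_cancel_left, add_sub_cancel_right] at h
    rw [← h]
    congr 1 with x
    ring
  rw [hreflect]
  refine integral_sub_mul_abs_le_of_reflect_le hpq hαβ hL
    (by simpa using (hφ.comp_sub_left (α + β)).symm) fun x hx => ?_
  have hx' : α + β - x ∈ Icc α β := ⟨by linarith [hx.2], by linarith [hx.1]⟩
  simpa [add_comm] using hsym (α + β - x) hx'

end Holder

lemma trapezoid_sub_average_eq {f f' : ℝ → ℝ} {a b : ℝ} (hab : a ≠ b)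
    (hder : ∀ x ∈ uIcc a b, HasDerivAt f (f' x) x) (hint : IntervalIntegrable f' volume a b) :
    (f a + f b) / 2 - 1 / (b - a) * ∫ x in a..b, f x
      = 1 / (b - a) * ∫ x in a..b, (x - (a + b) / 2) * f' x := by
  have hparts := integral_mul_deriv_eq_deriv_mul (u := fun x => x - (a + b) / 2)
    (u' := fun _ => 1) (fun x _ => (hasDerivAt_id x).sub_const _) hder intervalIntegrable_const
    hint
  simp only [one_mul] at hparts
  rw [hparts]
  have : b - a ≠ 0 := sub_ne_zero.2 hab.symm
  field_simp
  ring

lemma abs_integral_sub_mul_le_s13 {g : ℝ → ℝ} {a b c : ℝ} (hac : a ≤ c) (hcb : c ≤ b)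
    (hg : IntervalIntegrable g volume a b) :
    |∫ x in a..b, (x - c) * g x|
      ≤ (∫ x in a..c, (c - x) * |g x|) + ∫ x in c..b, (x - c) * |g x| := by
  have hkernel : IntervalIntegrable (fun x => (x - c) * g x) volume a b :=
    hg.continuousOn_mul (by fun_prop)
  have hsub : ∀ {α β}, a ≤ α → β ≤ b → α ≤ β →
      IntervalIntegrable (fun x => (x - c) * g x) volume α β :=
    fun hα hβ hαβ => hkernel.mono_set (by
      rw [uIcc_of_le hαβ, uIcc_of_le (hac.trans hcb)]; exact Icc_subset_Icc hα hβ)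
  rw [← integral_add_adjacent_intervals (hsub le_rfl hcb hac) (hsub hac le_rfl hcb)]
  refine (abs_add_le _ _).trans (add_le_add ?_ ?_)
  · refine (abs_integral_le_integral_abs hac).trans_eq (integral_congr fun x hx => ?_)
    rw [uIcc_of_le hac] at hx
    simp only [abs_mul, abs_of_nonpos (sub_nonpos.2 hx.2), neg_sub]
  · refine (abs_integral_le_integral_abs hcb).trans_eq (integral_congr fun x hx => ?_)
    rw [uIcc_of_le hcb] at hx
    simp only [abs_mul, abs_of_nonneg (sub_nonneg.2 hx.1)]

lemma add_le_two_mul_of_half_rpow_mul_add_le {s A B M : ℝ}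
    (h : (1 / 2 : ℝ) ^ s * A + (1 / 2) ^ s * B ≤ M) : A + B ≤ 2 * ((1 / 2) ^ (1 - s) * M) := by
  have hpos : (0 : ℝ) < (1 / 2) ^ s := by positivity
  have hrhs : 2 * ((1 / 2 : ℝ) ^ (1 - s) * M) = M / (1 / 2) ^ s := by
    rw [Real.rpow_sub (by norm_num), Real.rpow_one]
    field_simp
  rw [hrhs, le_div_iff₀ hpos]
  linarith

lemma rpow_abs_add_reflect_le_of_sConcave {g : ℝ → ℝ} {a b s q α β : ℝ} (hq : 0 < q)
    (hconc : ∀ x ∈ Icc a b, ∀ y ∈ Icc a b, ∀ t ∈ Icc (0:ℝ) 1,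
      t ^ s * |g x| ^ q + (1 - t) ^ s * |g y| ^ q ≤ |g (t * x + (1 - t) * y)| ^ q)
    (hα : a ≤ α) (hβ : β ≤ b) (x : ℝ) (hx : x ∈ Icc α β) :
    |g x| ^ q + |g (α + β - x)| ^ q
      ≤ 2 * ((1 / 2) ^ ((1 - s) / q) * |g ((α + β) / 2)|) ^ q := by
  have h := hconc x ⟨hα.trans hx.1, hx.2.trans hβ⟩ (α + β - x)
    ⟨by linarith [hx.2], by linarith [hx.1]⟩ (1 / 2) ⟨by norm_num, by norm_num⟩
  rw [show (1 : ℝ) - 1 / 2 = 1 / 2 by norm_num,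
    show 1 / 2 * x + 1 / 2 * (α + β - x) = (α + β) / 2 by ring] at h
  rw [Real.mul_rpow (by positivity) (abs_nonneg _), ← Real.rpow_mul (by norm_num),
    div_mul_cancel₀ _ hq.ne']
  exact add_le_two_mul_of_half_rpow_mul_add_le h

theorem stmt_13_general (I : Set ℝ) (f f' : ℝ → ℝ) (a b s p q : ℝ)
    (hab : a < b) (hI : Set.Icc a b ⊆ interior I)
    (hq : 1 < q) (hpq : 1/p + 1/q = 1)
    (hder : ∀ x ∈ interior I, HasDerivAt f (f' x) x)
    (hint : IntervalIntegrable f' volume a b)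
    (hconc : ∀ x ∈ Set.Icc a b, ∀ y ∈ Set.Icc a b, ∀ t ∈ Set.Icc (0:ℝ) 1,
      t ^ s * |f' x| ^ q + (1 - t) ^ s * |f' y| ^ q ≤ |f' (t * x + (1 - t) * y)| ^ q) :
    |(f a + f b)/2 - (1 / (b - a)) * ∫ x in a..b, f x|
      ≤ ((b - a)/4) * (1/(p+1)) ^ (1/p) * ((1:ℝ)/2) ^ ((1-s)/q) *
        (|f' ((3*b + a)/4)| + |f' ((3*a + b)/4)|) := by
  have hpq' : p.HolderConjugate q :=
    (Real.holderConjugate_iff.2 ⟨hq, by simpa [one_div, add_comm] using hpq⟩).symm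
  set c := (a + b) / 2 with hc
  have hac : a ≤ c := by linarith
  have hcb : c ≤ b := by linarith
  have hc_mem : c ∈ uIcc a b := Icc_subset_uIcc ⟨hac, hcb⟩
  have hK : (0 : ℝ) ≤ (1 / 2) ^ ((1 - s) / q) := by positivity
  have hleft := integral_rev_sub_mul_abs_le_of_reflect_le hpq' hac (mul_nonneg hK (abs_nonneg _))
    (hint.mono_set (uIcc_subset_uIcc_left hc_mem))
    (rpow_abs_add_reflect_le_of_sConcave hpq'.symm.pos hconc le_rfl hcb)
  have hright := integral_sub_mul_abs_le_of_reflect_le hpq' hcb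
    (mul_nonneg hK (abs_nonneg _)) (hint.mono_set (uIcc_subset_uIcc_right hc_mem))
    (rpow_abs_add_reflect_le_of_sConcave hpq'.symm.pos hconc hac le_rfl)
  rw [trapezoid_sub_average_eq hab.ne (fun x hx => hder x (hI (uIcc_of_le hab.le ▸ hx))) hint,
    abs_mul, abs_of_pos (by simpa using hab)]
  calc 1 / (b - a) * |∫ x in a..b, (x - c) * f' x|
      ≤ 1 / (b - a) * ((∫ x in a..c, (c - x) * |f' x|) + ∫ x in c..b, (x - c) * |f' x|) := by
        gcongr
        exact abs_integral_sub_mul_le_s13 hac hcb hint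
    _ ≤ 1 / (b - a) * ((c - a) ^ 2 * (1 / (p + 1)) ^ (1 / p) *
          ((1 / 2) ^ ((1 - s) / q) * |f' ((a + c) / 2)|) + (b - c) ^ 2 * (1 / (p + 1)) ^ (1 / p) *
          ((1 / 2) ^ ((1 - s) / q) * |f' ((c + b) / 2)|)) := by
        gcongr
    _ = _ := by
        rw [show (a + c) / 2 = (3 * a + b) / 4 by ring, show (c + b) / 2 = (3 * b + a) / 4 by ring,
          show c - a = (b - a) / 2 by ring, show b - c = (b - a) / 2 by ring]
        field_simp
        ring

theorem stmt_13 (I : Set ℝ) (f f' : ℝ → ℝ) (a b s p q : ℝ)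
    (hab : a < b) (hI0 : I ⊆ Set.Ici (0:ℝ)) (hI : Set.Icc a b ⊆ interior I)
    (hs : s ∈ Set.Ioc (0:ℝ) 1) (hq : 1 < q) (hpq : 1/p + 1/q = 1)
    (hder : ∀ x ∈ interior I, HasDerivAt f (f' x) x)
    (hint : IntervalIntegrable f' volume a b)
    (hconc : ∀ x ∈ Set.Icc a b, ∀ y ∈ Set.Icc a b, ∀ t ∈ Set.Icc (0:ℝ) 1,
      t ^ s * |f' x| ^ q + (1 - t) ^ s * |f' y| ^ q ≤ |f' (t * x + (1 - t) * y)| ^ q) :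
    |(f a + f b)/2 - (1 / (b - a)) * ∫ x in a..b, f x|
      ≤ ((b - a)/4) * (1/(p+1)) ^ (1/p) * ((1:ℝ)/2) ^ ((1-s)/q) *
        (|f' ((3*b + a)/4)| + |f' ((3*a + b)/4)|) :=
  stmt_13_general I f f' a b s p q hab hI hq hpq hder hint hconc
end
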